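/- Let I ⊆ k[x_1,…,x_n] be an ideal, v ∈ ℝ^n, and f ∈ in_v(I). Then f can be written as f = Σ_{i=1}^{s} in_v(c_i) where c_1,…,c_s ∈ I and the summands in_v(c_1),…,in_v(c_s) have pairwise distinct v-degrees. -/

import Mathlib

/-! The `v`-homogeneous components of every element of `in_v(I)` are initial forms of elements
of `I`. This holds for the generators `in_v(c)`, and it survives sums, because two initial forms
of the same `v`-degree add up to `0` or to `in_v(c + c')`, and multiplication by monomials,
because `in_v(m c) = m in_v(c)`. Splitting `f` into its `v`-homogeneous components then gives
the decomposition. -/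

open MvPolynomial

/-- A term order on the monomials of `k[x_1,…,x_n]`, identified with exponent
vectors in `ℕ^n`: a strict total order with `1` smallest and compatible with
multiplication of monomials. -/
structure TermOrder (n : ℕ) : Type where
  lt : (Fin n →₀ ℕ) → (Fin n →₀ ℕ) → Prop
  irrefl : ∀ a, ¬ lt a a
  trans : ∀ a b c, lt a b → lt b c → lt a c
  total : ∀ a b, a ≠ b → lt a b ∨ lt b a
  zero_lt : ∀ a, a ≠ 0 → lt 0 a
  add_right : ∀ a b c, lt a b → lt (a + c) (b + c)

variable {n : ℕ} {k : Type*} [Field k]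

/-- The exponent of the `τ`-largest term of `f` (and `0` if `f = 0`). -/
noncomputable def TermOrder.leadExp (τ : TermOrder n) (f : MvPolynomial (Fin n) k) :
    Fin n →₀ ℕ :=
  letI := Classical.propDecidable (∃ α, α ∈ f.support ∧ ∀ β ∈ f.support, β ≠ α → τ.lt β α)
  if h : ∃ α, α ∈ f.support ∧ ∀ β ∈ f.support, β ≠ α → τ.lt β α then h.choose else 0

/-- The initial term `in_τ(f)` : the `τ`-largest term of `f` (with coefficient). -/
noncomputable def TermOrder.initialTerm (τ : TermOrder n) (f : MvPolynomial (Fin n) k) :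
    MvPolynomial (Fin n) k :=
  monomial (τ.leadExp f) (f.coeff (τ.leadExp f))

/-- The initial ideal `in_τ(I) = ⟨in_τ(f) : f ∈ I \ {0}⟩`. -/
noncomputable def TermOrder.initialIdeal (τ : TermOrder n) (I : Ideal (MvPolynomial (Fin n) k)) :
    Ideal (MvPolynomial (Fin n) k) :=
  Ideal.span {p | ∃ f ∈ I, f ≠ 0 ∧ p = τ.initialTerm f}

/-- The `ω`-degree `⟨ω,α⟩` of a monomial exponent `α`. -/
noncomputable def wdeg (ω : Fin n → ℝ) (α : Fin n →₀ ℕ) : ℝ := ∑ i, ω i * (α i : ℝ)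

/-- The initial form `in_ω(f)`: the sum of the terms of `f` whose exponents
maximize `⟨ω,·⟩`. -/
noncomputable def initialForm (ω : Fin n → ℝ) (f : MvPolynomial (Fin n) k) :
    MvPolynomial (Fin n) k :=
  letI : DecidablePred fun α : Fin n →₀ ℕ => ∀ β ∈ f.support, wdeg ω β ≤ wdeg ω α :=
    Classical.decPred _
  ∑ α ∈ f.support.filter (fun α => ∀ β ∈ f.support, wdeg ω β ≤ wdeg ω α),
    monomial α (f.coeff α)

/-- The initial ideal `in_ω(I) = ⟨in_ω(f) : f ∈ I⟩`. -/
noncomputable def initialFormIdeal (ω : Fin n → ℝ) (I : Ideal (MvPolynomial (Fin n) k)) :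
    Ideal (MvPolynomial (Fin n) k) :=
  Ideal.span {p | ∃ f ∈ I, p = initialForm ω f}

/-- `C_≺(I)`: the closure of `{u : in_u(I) = in_≺(I)}` in `ℝ^n`. -/
noncomputable def Cprec (τ : TermOrder n) (I : Ideal (MvPolynomial (Fin n) k)) :
    Set (Fin n → ℝ) :=
  closure {u : Fin n → ℝ | initialFormIdeal u I = τ.initialIdeal I}

/-- `C_v(I)`: the closure of the equivalence class `{u : in_u(I) = in_v(I)}`. -/
noncomputable def Cv (I : Ideal (MvPolynomial (Fin n) k)) (v : Fin n → ℝ) :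
    Set (Fin n → ℝ) :=
  closure {u : Fin n → ℝ | initialFormIdeal u I = initialFormIdeal v I}

/-- `F` is a face of `C`: either empty or the set of maximizers over `C` of a
linear functional. -/
def IsFaceOf (C F : Set (Fin n → ℝ)) : Prop :=
  F = ∅ ∨ ∃ w : Fin n → ℝ, F = {x ∈ C | ∀ y ∈ C, ∑ i, w i * y i ≤ ∑ i, w i * x i}

/-- The Gröbner fan of `I`: all nonempty faces of the cones `C_v(I)`, `v ∈ ℝ^n_{>0}`. -/
noncomputable def GroebnerFan (I : Ideal (MvPolynomial (Fin n) k)) :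
    Set (Set (Fin n → ℝ)) :=
  {F | F.Nonempty ∧ ∃ v : Fin n → ℝ, (∀ i, 0 < v i) ∧ IsFaceOf (Cv I v) F}

/-- `G` is a (finite) Gröbner basis of `I` w.r.t. `τ`. -/
def IsGroebnerBasis (τ : TermOrder n) (I : Ideal (MvPolynomial (Fin n) k))
    (G : Set (MvPolynomial (Fin n) k)) : Prop :=
  G.Finite ∧ Ideal.span G = I ∧ τ.initialIdeal I = Ideal.span (τ.initialTerm '' G)

/-- `G` is the reduced Gröbner basis of `I` w.r.t. `τ`. -/
def IsReducedGroebnerBasis (τ : TermOrder n) (I : Ideal (MvPolynomial (Fin n) k))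
    (G : Set (MvPolynomial (Fin n) k)) : Prop :=
  IsGroebnerBasis τ I G ∧
  (∀ g ∈ G, g.coeff (τ.leadExp g) = 1) ∧
  (∀ g ∈ G, ∀ α ∈ g.support, α ≠ τ.leadExp g →
    (monomial α 1 : MvPolynomial (Fin n) k) ∉ τ.initialIdeal I) ∧
  (∀ g ∈ G, Ideal.span (τ.initialTerm '' (G \ {g})) ≠ τ.initialIdeal I)

open Finset
open Finsupp (weight)

theorem MvPolynomial.sum_weightedHomogeneousComponent_image_support {σ R M : Type*}
    [CommSemiring R] [AddCommMonoid M] [DecidableEq M] (w : σ → M) (f : MvPolynomial σ R) :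
    ∑ d ∈ f.support.image (weight w), weightedHomogeneousComponent w d f = f := by
  conv_rhs => rw [← sum_weightedHomogeneousComponent w f]
  refine (finsum_eq_sum_of_support_subset _ fun d hd => ?_).symm
  by_contra hD
  refine hd (weightedHomogeneousComponent_eq_zero' d f fun α hα hαd => hD ?_)
  exact mem_coe.2 (mem_image.2 ⟨α, hα, hαd⟩)

theorem MvPolynomial.weightedHomogeneousComponent_monomial_mul {σ R M : Type*}
    [CommSemiring R] [AddCommGroup M] (w : σ → M) (d : M) (α : σ →₀ ℕ) (a : R)
    (f : MvPolynomial σ R) :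
    weightedHomogeneousComponent w d (monomial α a * f) =
      monomial α a * weightedHomogeneousComponent w (d - weight w α) f := by
  classical
  ext β
  simp only [coeff_weightedHomogeneousComponent, coeff_monomial_mul']
  by_cases hαβ : α ≤ β
  · have hβ : weight w β = weight w (β - α) + weight w α := by
      rw [← map_add, tsub_add_cancel_of_le hαβ]
    simp only [hαβ, hβ, if_true, ← eq_sub_iff_add_eq, mul_ite, mul_zero]
  · simp only [hαβ, if_false, ite_self]

section

variable (v : Fin n → ℝ)

theorem wdeg_eq_weight : wdeg v = weight v := by
  ext α
  simp [wdeg, Finsupp.weight_eq_sum, mul_comm]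

theorem coeff_initialForm (f : MvPolynomial (Fin n) k) (β : Fin n →₀ ℕ) :
    coeff β (initialForm v f) =
      if ∀ γ ∈ f.support, weight v γ ≤ weight v β then coeff β f else 0 := by
  classical
  simp only [initialForm, coeff_sum, coeff_monomial, sum_ite_eq', mem_filter, wdeg_eq_weight]
  by_cases hβ : β ∈ f.support
  · simp [hβ]
  · simp [hβ, notMem_support_iff.1 hβ]

theorem initialForm_eq_weightedHomogeneousComponent {f : MvPolynomial (Fin n) k}
    {β : Fin n →₀ ℕ} (hβ : β ∈ f.support) (hmax : ∀ γ ∈ f.support, weight v γ ≤ weight v β) :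
    initialForm v f = weightedHomogeneousComponent v (weight v β) f := by
  classical
  ext γ
  rw [coeff_initialForm, coeff_weightedHomogeneousComponent]
  by_cases hγ : γ ∈ f.support
  · refine if_congr ⟨fun h => le_antisymm (hmax γ hγ) (h β hβ), fun h δ hδ => ?_⟩ rfl rfl
    exact h ▸ hmax δ hδ
  · simp [notMem_support_iff.1 hγ]

theorem exists_initialForm_eq_weightedHomogeneousComponent {f : MvPolynomial (Fin n) k}
    (hf : f ≠ 0) : ∃ β ∈ f.support, (∀ γ ∈ f.support, weight v γ ≤ weight v β) ∧
      initialForm v f = weightedHomogeneousComponent v (weight v β) f := by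
  obtain ⟨β, hβ, hmax⟩ := f.support.exists_max_image (weight v) (support_nonempty.2 hf)
  exact ⟨β, hβ, hmax, initialForm_eq_weightedHomogeneousComponent v hβ hmax⟩

theorem initialForm_zero : initialForm v (0 : MvPolynomial (Fin n) k) = 0 := by
  ext β
  simp [coeff_initialForm]

theorem initialForm_eq_zero_iff {f : MvPolynomial (Fin n) k} : initialForm v f = 0 ↔ f = 0 := by
  classical
  refine ⟨fun h => ?_, fun h => by rw [h, initialForm_zero]⟩
  by_contra hf
  obtain ⟨β, hβ, -, he⟩ := exists_initialForm_eq_weightedHomogeneousComponent v hf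
  have := congr_arg (coeff β) (h ▸ he)
  rw [coeff_weightedHomogeneousComponent, if_pos rfl, coeff_zero] at this
  exact mem_support_iff.1 hβ this.symm

theorem exists_isWeightedHomogeneous_initialForm (f : MvPolynomial (Fin n) k) :
    ∃ d, IsWeightedHomogeneous v (initialForm v f) d := by
  obtain rfl | hf := eq_or_ne f 0
  · exact ⟨0, by rw [initialForm_zero]; exact isWeightedHomogeneous_zero _ _ _⟩
  obtain ⟨β, -, -, he⟩ := exists_initialForm_eq_weightedHomogeneousComponent v hf
  exact ⟨_, he ▸ weightedHomogeneousComponent_isWeightedHomogeneous _ _⟩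

theorem weight_lt_of_mem_support_sub_initialForm {f : MvPolynomial (Fin n) k} {d : ℝ}
    (h : IsWeightedHomogeneous v (initialForm v f) d) {α : Fin n →₀ ℕ}
    (hα : α ∈ (f - initialForm v f).support) : weight v α < d := by
  classical
  obtain rfl | hf := eq_or_ne f 0
  · simp [initialForm_zero] at hα
  obtain ⟨β, hβ, hmax, he⟩ := exists_initialForm_eq_weightedHomogeneousComponent v hf
  have hβd : weight v β = d := h <| by
    rwa [he, coeff_weightedHomogeneousComponent, if_pos rfl, ← mem_support_iff]
  rw [mem_support_iff, coeff_sub, he, coeff_weightedHomogeneousComponent] at hα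
  split_ifs at hα with hαβ
  · exact absurd (sub_self _) hα
  · exact hβd ▸ lt_of_le_of_ne (hmax α (mem_support_iff.2 (by simpa using hα))) hαβ

theorem initialForm_add_of_weight_lt {g r : MvPolynomial (Fin n) k} {d : ℝ} (hg0 : g ≠ 0)
    (hg : IsWeightedHomogeneous v g d) (hr : ∀ α ∈ r.support, weight v α < d) :
    initialForm v (g + r) = g := by
  classical
  obtain ⟨β, hβ⟩ := support_nonempty.2 hg0
  have hβd : weight v β = d := hg (mem_support_iff.1 hβ)
  have hβ' : β ∈ (g + r).support := by
    rwa [mem_support_iff, coeff_add, notMem_support_iff.1 fun h => (hr β h).ne hβd, add_zero,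
      ← mem_support_iff]
  have hmax : ∀ γ ∈ (g + r).support, weight v γ ≤ weight v β := by
    intro γ hγ
    rcases mem_union.1 (support_add hγ) with hγ | hγ
    · exact (hg (mem_support_iff.1 hγ)).trans hβd.symm |>.le
    · exact hβd ▸ (hr γ hγ).le
  rw [initialForm_eq_weightedHomogeneousComponent v hβ' hmax, map_add, hβd,
    hg.weightedHomogeneousComponent_same,
    weightedHomogeneousComponent_eq_zero' d r fun α hα => (hr α hα).ne, add_zero]

theorem initialForm_monomial_mul (α : Fin n →₀ ℕ) (a : k) (f : MvPolynomial (Fin n) k) :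
    initialForm v (monomial α a * f) = monomial α a * initialForm v f := by
  classical
  obtain rfl | ha := eq_or_ne a 0
  · simp [initialForm_zero]
  obtain rfl | hf := eq_or_ne f 0
  · simp [initialForm_zero]
  obtain ⟨d, hd⟩ := exists_isWeightedHomogeneous_initialForm v f
  have hsplit : monomial α a * f =
      monomial α a * initialForm v f + monomial α a * (f - initialForm v f) := by ring
  rw [hsplit]
  refine initialForm_add_of_weight_lt v ?_ ((isWeightedHomogeneous_monomial v α a rfl).mul hd)
    fun γ hγ => ?_
  · exact mul_ne_zero (by simpa using ha) ((initialForm_eq_zero_iff v).not.2 hf)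
  · obtain ⟨x, hx, y, hy, rfl⟩ := mem_add.1 (support_mul _ _ hγ)
    rw [mem_singleton.1 (support_monomial_subset hx), map_add]
    exact add_lt_add_right (weight_lt_of_mem_support_sub_initialForm v hd hy) _

def HasInitialFormComponents (I : Ideal (MvPolynomial (Fin n) k)) (f : MvPolynomial (Fin n) k) :
    Prop :=
  ∀ d, weightedHomogeneousComponent v d f ∈ initialForm v '' I

variable {I : Ideal (MvPolynomial (Fin n) k)}

theorem initialForm_add_initialForm_mem_image {c c' : MvPolynomial (Fin n) k} (hc : c ∈ I)
    (hc' : c' ∈ I) {d : ℝ} (h : IsWeightedHomogeneous v (initialForm v c) d)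
    (h' : IsWeightedHomogeneous v (initialForm v c') d) :
    initialForm v c + initialForm v c' ∈ initialForm v '' I := by
  obtain h0 | h0 := eq_or_ne (initialForm v c + initialForm v c') 0
  · exact ⟨0, I.zero_mem, by rw [h0, initialForm_zero]⟩
  refine ⟨c + c', I.add_mem hc hc', ?_⟩
  have hsplit : c + c' = (initialForm v c + initialForm v c') +
      ((c - initialForm v c) + (c' - initialForm v c')) := by ring
  rw [hsplit]
  refine initialForm_add_of_weight_lt v h0 (h.add h') fun α hα => ?_
  rcases mem_union.1 (support_add hα) with hα | hα
  · exact weight_lt_of_mem_support_sub_initialForm v h hα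
  · exact weight_lt_of_mem_support_sub_initialForm v h' hα

theorem hasInitialFormComponents_initialForm {c : MvPolynomial (Fin n) k} (hc : c ∈ I) :
    HasInitialFormComponents v I (initialForm v c) := by
  intro d
  obtain ⟨e, he⟩ := exists_isWeightedHomogeneous_initialForm v c
  obtain rfl | hde := eq_or_ne d e
  · exact ⟨c, hc, he.weightedHomogeneousComponent_same.symm⟩
  · exact ⟨0, I.zero_mem, by rw [initialForm_zero, he.weightedHomogeneousComponent_ne d hde]⟩

theorem HasInitialFormComponents.add {f g : MvPolynomial (Fin n) k}
    (hf : HasInitialFormComponents v I f) (hg : HasInitialFormComponents v I g) :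
    HasInitialFormComponents v I (f + g) := by
  intro d
  obtain ⟨c, hc, hcf⟩ := hf d
  obtain ⟨c', hc', hcg⟩ := hg d
  rw [map_add, ← hcf, ← hcg]
  exact initialForm_add_initialForm_mem_image v hc hc'
    (hcf ▸ weightedHomogeneousComponent_isWeightedHomogeneous d f)
    (hcg ▸ weightedHomogeneousComponent_isWeightedHomogeneous d g)

theorem HasInitialFormComponents.monomial_mul {f : MvPolynomial (Fin n) k}
    (hf : HasInitialFormComponents v I f) (α : Fin n →₀ ℕ) (a : k) :
    HasInitialFormComponents v I (monomial α a * f) := by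
  intro d
  obtain ⟨c, hc, hcf⟩ := hf (d - weight v α)
  exact ⟨monomial α a * c, I.mul_mem_left _ hc, by
    rw [initialForm_monomial_mul, hcf, weightedHomogeneousComponent_monomial_mul]⟩

theorem HasInitialFormComponents.mul {f : MvPolynomial (Fin n) k}
    (hf : HasInitialFormComponents v I f) (p : MvPolynomial (Fin n) k) :
    HasInitialFormComponents v I (p * f) := by
  induction p using MvPolynomial.induction_on' with
  | monomial α a => exact hf.monomial_mul v α a
  | add p q hp hq => rw [add_mul]; exact hp.add v hq

theorem hasInitialFormComponents_of_mem_initialFormIdeal {f : MvPolynomial (Fin n) k}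
    (hf : f ∈ initialFormIdeal v I) : HasInitialFormComponents v I f := by
  induction hf using Submodule.span_induction with
  | mem x hx =>
    obtain ⟨c, hc, rfl⟩ := hx
    exact hasInitialFormComponents_initialForm v hc
  | zero => exact fun d => ⟨0, I.zero_mem, by rw [map_zero, initialForm_zero]⟩
  | add x y _ _ hx hy => exact hx.add v hy
  | smul p x _ hx => exact hx.mul v p

end

/-- Every `f ∈ in_v(I)` can be written as `f = Σᵢ in_v(cᵢ)` with `cᵢ ∈ I` and
the summands `in_v(cᵢ)` of pairwise distinct `v`-degrees. -/
theorem mem_initialFormIdeal_decomposition (I : Ideal (MvPolynomial (Fin n) k))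
    (v : Fin n → ℝ) (f : MvPolynomial (Fin n) k) (hf : f ∈ initialFormIdeal v I) :
    ∃ (s : ℕ) (c : Fin s → MvPolynomial (Fin n) k),
      (∀ i, c i ∈ I) ∧
      f = ∑ i, initialForm v (c i) ∧
      ∀ i j, i ≠ j →
        ∀ α ∈ (initialForm v (c i)).support, ∀ β ∈ (initialForm v (c j)).support,
          wdeg v α ≠ wdeg v β := by
  classical
  choose c hcI hc using hasInitialFormComponents_of_mem_initialFormIdeal v hf
  set D := f.support.image (weight v)
  let e := D.equivFin
  refine ⟨D.card, fun i => c (e.symm i), fun i => hcI _, ?_, ?_⟩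
  · simp only [hc]
    rw [Equiv.sum_comp e.symm fun d : D => weightedHomogeneousComponent v (d : ℝ) f,
      Finset.sum_coe_sort D fun d => weightedHomogeneousComponent v d f,
      sum_weightedHomogeneousComponent_image_support]
  · intro i j hij α hα β hβ hαβ
    rw [hc, mem_support_iff] at hα hβ
    rw [wdeg_eq_weight, weightedHomogeneousComponent_isWeightedHomogeneous _ _ hα,
      weightedHomogeneousComponent_isWeightedHomogeneous _ _ hβ] at hαβ
    exact hij (e.symm.injective (Subtype.ext hαβ))
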